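/- arXiv:2206.05467 — 3 statements merged into one kernel-verified Lean document; each statement's English description precedes it below -/
import Mathlib

section
/- Let d ≥ 2, let G_0 be a subgroup of Σ_d (the d-adic integers) with the property that whenever (0, i_1, i_2, ...) ∈ G_0 (i.e. an element whose first digit is 0, obtained by prepending 0 to the sequence (i_n)), also (i_1, i_2, ...) ∈ G_0, i.e. G_0 is invariant under the shift restricted to elements with first digit 0. If d is prime, G_0 is closed, and G_0 ≠ {0}, then G_0 = Σ_d. -/
/-!
Shifting away the leading zero digits of a nonzero element of `G₀` gives `y ∈ G₀` with
`y 0 ≠ 0`. For `d` prime, the first `n` digits of `y` then represent a unit of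
`ℤ/dⁿℤ`, so the multiples of `y`, which lie in `G₀`, realise every block of `n` leading
digits. Hence `G₀` is dense in `Σ_d`, and being closed it is everything.
-/

/-- `i_1 + i_2 d + ⋯ + i_n d^(n-1)` for a digit sequence `i` (digits indexed from 0). -/
def dVal (d : ℕ) (i : ℕ → Fin d) (n : ℕ) : ℕ :=
  ∑ m ∈ Finset.range n, (i m : ℕ) * d ^ m

open Filter Topology

section dVal

variable {d : ℕ}

theorem dVal_succ (i : ℕ → Fin d) (n : ℕ) :
    dVal d i (n + 1) = i 0 + d * dVal d (fun m => i (m + 1)) n := by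
  rw [dVal, Finset.sum_range_succ', dVal, Finset.mul_sum, add_comm]
  simp only [pow_zero, mul_one, pow_succ]
  exact congrArg (_ + ·) (Finset.sum_congr rfl fun m _ => by ring)

theorem dVal_lt (i : ℕ → Fin d) (n : ℕ) : dVal d i n < d ^ n := by
  induction n with
  | zero => simp [dVal]
  | succ n ih =>
    calc dVal d i (n + 1) = dVal d i n + i n * d ^ n := Finset.sum_range_succ _ _
      _ < d ^ n + i n * d ^ n := by omega
      _ = ((i n : ℕ) + 1) * d ^ n := by ring
      _ ≤ d * d ^ n := Nat.mul_le_mul_right _ (i n).isLt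
      _ = d ^ (n + 1) := (pow_succ' d n).symm

theorem eq_of_dVal_eq {i j : ℕ → Fin d} {n : ℕ} (h : dVal d i n = dVal d j n) :
    ∀ m < n, i m = j m := by
  induction n generalizing i j with
  | zero => intro m hm; omega
  | succ n ih =>
    rw [dVal_succ, dVal_succ] at h
    have hd : 0 < d := (i 0).pos
    have h0 : i 0 = j 0 := Fin.ext <| by
      simpa [Nat.add_mul_mod_self_left, Nat.mod_eq_of_lt] using congrArg (· % d) h
    have htail : dVal d (fun m => i (m + 1)) n = dVal d (fun m => j (m + 1)) n := by
      rw [h0] at h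
      exact Nat.eq_of_mul_eq_mul_left hd (Nat.add_left_cancel h)
    rintro (_ | m) hm
    · exact h0
    · exact ih htail m (by omega)

theorem coprime_dVal_succ [NeZero d] (hd : d.Prime) {i : ℕ → Fin d} (hi : i 0 ≠ 0) (n : ℕ) :
    (dVal d i (n + 1)).Coprime (d ^ (n + 1)) := by
  have hmod : dVal d i (n + 1) % d = i 0 := by
    rw [dVal_succ, Nat.add_mul_mod_self_left, Nat.mod_eq_of_lt (i 0).isLt]
  refine Nat.Coprime.pow_right _ (hd.coprime_iff_not_dvd.mpr ?_).symm
  rw [Nat.dvd_iff_mod_eq_zero, hmod]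
  exact Fin.val_ne_zero_iff.mpr hi

end dVal

theorem ZMod.addSubmonoid_eq_top_of_isUnit_mem {N : ℕ} [NeZero N] (S : AddSubmonoid (ZMod N))
    {u : ZMod N} (hu : IsUnit u) (huS : u ∈ S) : S = ⊤ := by
  refine eq_top_iff.mpr fun r _ => ?_
  have hr : (r * u⁻¹).val • u = r := by
    rw [nsmul_eq_mul, ZMod.natCast_zmod_val, mul_assoc, ZMod.inv_mul_of_unit u hu, mul_one]
  exact hr ▸ S.nsmul_mem huS _

theorem mem_closure_of_forall_exists_eq_lt {α : Type*} [TopologicalSpace α]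
    {s : Set (ℕ → α)} {w : ℕ → α} (h : ∀ n, ∃ z ∈ s, ∀ m < n, z m = w m) : w ∈ closure s := by
  choose z hzs hzw using h
  have hz : Tendsto z atTop (𝓝 w) := tendsto_pi_nhds.mpr fun m =>
    tendsto_const_nhds.congr' <| (eventually_gt_atTop m).mono fun n hn => (hzw n m hn).symm
  exact mem_closure_of_tendsto hz (Eventually.of_forall hzs)

section

variable {d : ℕ} [NeZero d] {G : Set (ℕ → Fin d)}

theorem exists_mem_apply_zero_ne_zero (hshift : ∀ i ∈ G, i 0 = 0 → (fun n => i (n + 1)) ∈ G)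
    {x : ℕ → Fin d} (hx : x ∈ G) {k : ℕ} (hk : x k ≠ 0) : ∃ y ∈ G, y 0 ≠ 0 := by
  induction k generalizing x with
  | zero => exact ⟨x, hx, hk⟩
  | succ k ih =>
    by_cases hx0 : x 0 = 0
    · exact ih (hshift x hx hx0) hk
    · exact ⟨x, hx, hx0⟩

theorem exists_mem_dVal_eq (hd : d.Prime) {add : (ℕ → Fin d) → (ℕ → Fin d) → (ℕ → Fin d)}
    (hadd : ∀ i j n, dVal d (add i j) n ≡ dVal d i n + dVal d j n [MOD d ^ n])
    (hzero : 0 ∈ G) (hadd_mem : ∀ i ∈ G, ∀ j ∈ G, add i j ∈ G)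
    {y : ℕ → Fin d} (hy : y ∈ G) (hy0 : y 0 ≠ 0) (w : ℕ → Fin d) (n : ℕ) :
    ∃ z ∈ G, dVal d z (n + 1) = dVal d w (n + 1) := by
  have : NeZero (d ^ (n + 1)) := ⟨pow_ne_zero _ hd.ne_zero⟩
  let S : AddSubmonoid (ZMod (d ^ (n + 1))) :=
    { carrier := (fun z => (dVal d z (n + 1) : ZMod (d ^ (n + 1)))) '' G
      add_mem' := by
        rintro _ _ ⟨i, hi, rfl⟩ ⟨j, hj, rfl⟩
        refine ⟨add i j, hadd_mem i hi j hj, ?_⟩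
        simpa using (ZMod.natCast_eq_natCast_iff _ _ _).mpr (hadd i j (n + 1))
      zero_mem' := ⟨0, hzero, by simp [dVal]⟩ }
  have hS : S = ⊤ := ZMod.addSubmonoid_eq_top_of_isUnit_mem S
    ((ZMod.isUnit_iff_coprime _ _).mpr (coprime_dVal_succ hd hy0 n)) ⟨y, hy, rfl⟩
  obtain ⟨z, hz, hzw⟩ : (dVal d w (n + 1) : ZMod (d ^ (n + 1))) ∈ S := hS ▸ trivial
  exact ⟨z, hz, ((ZMod.natCast_eq_natCast_iff _ _ _).mp hzw).eq_of_lt_of_lt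
    (dVal_lt _ _) (dVal_lt _ _)⟩

end

/-- Let `d` be prime and let `G₀` be a subgroup of the group `Σ_d`
of `d`-adic integers (with respect to the addition-with-carry `add`, characterised by
the congruences `hadd`), which is invariant under the shift restricted to elements
whose first digit is `0`. If `G₀` is closed and `G₀ ≠ {0}`, then `G₀ = Σ_d`. -/
theorem stmt_2 (d : ℕ) (hd : 2 ≤ d) (hprime : Nat.Prime d)
    (add : (ℕ → Fin d) → (ℕ → Fin d) → (ℕ → Fin d))
    (hadd : ∀ i j n, dVal d (add i j) n ≡ dVal d i n + dVal d j n [MOD d ^ n])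
    (G0 : Set (ℕ → Fin d))
    (hzero : (fun _ => (⟨0, by omega⟩ : Fin d)) ∈ G0)
    (hclosedAdd : ∀ i ∈ G0, ∀ j ∈ G0, add i j ∈ G0)
    (hshift : ∀ i ∈ G0, i 0 = (⟨0, by omega⟩ : Fin d) → (fun n => i (n + 1)) ∈ G0)
    (hclosed : IsClosed G0)
    (hnontriv : G0 ≠ {fun _ => (⟨0, by omega⟩ : Fin d)}) :
    G0 = Set.univ := by
  have : NeZero d := ⟨hprime.ne_zero⟩
  obtain ⟨x, hx, hx0⟩ : ∃ x ∈ G0, x ≠ 0 := by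
    by_contra! h
    exact hnontriv (Set.eq_singleton_iff_unique_mem.mpr ⟨hzero, h⟩)
  obtain ⟨k, hk⟩ := Function.ne_iff.mp hx0
  obtain ⟨y, hy, hy0⟩ := exists_mem_apply_zero_ne_zero hshift hx hk
  refine Set.eq_univ_of_forall fun w => hclosed.closure_subset <|
    mem_closure_of_forall_exists_eq_lt fun n => ?_
  obtain ⟨z, hz, hzw⟩ := exists_mem_dVal_eq hprime hadd hzero hclosedAdd hy hy0 w n
  exact ⟨z, hz, fun m hm => eq_of_dVal_eq hzw m (by omega)⟩
end

section
/- Under the transversality setup: if there exists a C^α function φ : ℝ/ℤ → ℂ and a constant c with f = λ^{-1}·φ∘T − φ + c, then h_i = φ̂ − φ̂(0) for every i ∈ Σ_d (where φ̂ is the lift of φ); in particular h_i does not depend on i. -/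
/-!
Write `u n = τ_{i,n}(x)`, `v n = τ_{i,n}(0)` and `g n = λⁿ (φ̂(u n) − φ̂(v n))`. Since `T̂`
maps `u (n+1)` and `v (n+1)` to `u n + i_n` and `v n + i_n` and `φ̂` is 1-periodic, the
cohomological equation turns the `n`-th summand of `h_i(x)` into `g n − g (n+1)`, so
`h_i(x) = g 0 = φ̂(x) − φ̂(0)` once `g` is summable. For that choose `m` with `|λ| < ρ^α`,
`ρ = (inf |(T̂^m)'|)^{1/m}`: the inverse branches contract, `ρⁿ |u n − v n| ≤ ρ^m |x|`, and
Hölder continuity bounds `‖g n‖` by a multiple of `(|λ| / ρ^α)ⁿ`.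
-/

/-- Iterated inverse branches `τ_{i,n} = τ_{i_n} ∘ ⋯ ∘ τ_{i_1}`, `τ_j(x) = τ(x+j)`. -/
def tauIt (tau : ℝ → ℝ) (i : ℕ → ℕ) : ℕ → ℝ → ℝ
  | 0 => id
  | n + 1 => fun x => tau (tauIt tau i n x + i n)

/-- `h_i(x) = Σ_{n≥1} λⁿ (f̂(τ_{i,n}(x)) − f̂(τ_{i,n}(0)))`. -/
noncomputable def hFun (tau : ℝ → ℝ) (fhat : ℝ → ℂ) (lam : ℂ) (i : ℕ → ℕ) (x : ℝ) : ℂ :=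
  ∑' n : ℕ, lam ^ (n + 1) *
    (fhat (tauIt tau i (n + 1) x) - fhat (tauIt tau i (n + 1) 0))

open Function

section Expansion

variable {T : ℝ → ℝ}

lemma one_le_deriv_iterate (hT : Differentiable ℝ T) (hT' : ∀ x, 1 ≤ deriv T x) (k : ℕ)
    (x : ℝ) : 1 ≤ deriv T^[k] x := by
  induction k with
  | zero => simp
  | succ k ih =>
    rw [iterate_succ', deriv_comp x hT.differentiableAt (hT.iterate k).differentiableAt]
    exact one_le_mul_of_one_le_of_one_le (hT' _) ih

lemma mul_abs_sub_le_abs_sub_of_le_deriv {f : ℝ → ℝ} (hf : Differentiable ℝ f) {C : ℝ}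
    (hC : 0 ≤ C) (hf' : ∀ x, C ≤ deriv f x) (a b : ℝ) : C * |a - b| ≤ |f a - f b| := by
  wlog hab : b ≤ a generalizing a b
  · rw [abs_sub_comm a, abs_sub_comm (f a)]
    exact this b a (le_of_not_ge hab)
  have key := mul_sub_le_image_sub_of_le_deriv hf hf' hab
  rwa [abs_of_nonneg (sub_nonneg.2 hab),
    abs_of_nonneg ((mul_nonneg hC (sub_nonneg.2 hab)).trans key)]

/-- `inf_x |(T^k)'(x)|`; the paper's expansion constant is `λ₀ = sup_k (minExpansion T k)^{1/k}`. -/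
noncomputable def minExpansion (T : ℝ → ℝ) (k : ℕ) : ℝ := sInf (Set.range fun x => |deriv T^[k] x|)

lemma minExpansion_le_abs_deriv (T : ℝ → ℝ) (k : ℕ) (x : ℝ) :
    minExpansion T k ≤ |deriv T^[k] x| :=
  csInf_le ⟨0, by rintro _ ⟨y, rfl⟩; exact abs_nonneg _⟩ ⟨x, rfl⟩

lemma one_le_minExpansion (hT : Differentiable ℝ T) (hT' : ∀ x, 1 ≤ deriv T x) (k : ℕ) :
    1 ≤ minExpansion T k :=
  le_csInf (Set.range_nonempty _) <| by
    rintro _ ⟨x, rfl⟩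
    exact (one_le_deriv_iterate hT hT' k x).trans (le_abs_self _)

lemma minExpansion_mul_abs_sub_le (hT : Differentiable ℝ T) (hT' : ∀ x, 1 ≤ deriv T x)
    (k : ℕ) (a b : ℝ) : minExpansion T k * |a - b| ≤ |T^[k] a - T^[k] b| :=
  mul_abs_sub_le_abs_sub_of_le_deriv (hT.iterate k)
    (zero_le_one.trans (one_le_minExpansion hT hT' k))
    (fun x => (minExpansion_le_abs_deriv T k x).trans_eq
      (abs_of_nonneg (zero_le_one.trans (one_le_deriv_iterate hT hT' k x)))) a b

end Expansion

section Orbits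

variable {d : ℕ} {T tau : ℝ → ℝ}

lemma map_add_natCast (hdeg : ∀ x, T (x + 1) = T x + d) (j : ℕ) (x : ℝ) :
    T (x + j) = T x + d * j := by
  induction j with
  | zero => simp
  | succ j ih => push_cast; rw [← add_assoc, hdeg, ih]; ring

lemma iterate_add_natCast (hdeg : ∀ x, T (x + 1) = T x + d) (k j : ℕ) (x : ℝ) :
    T^[k] (x + j) = T^[k] x + d ^ k * j := by
  induction k generalizing x j with
  | zero => simp
  | succ k ih =>
    rw [iterate_succ_apply, iterate_succ_apply, map_add_natCast hdeg, ← Nat.cast_mul, ih]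
    push_cast
    ring

lemma exists_iterate_tauIt_eq_add (htau : ∀ x, T (tau x) = x)
    (hdeg : ∀ x, T (x + 1) = T x + d) (i : ℕ → ℕ) (n k : ℕ) :
    ∃ K : ℕ, ∀ x, T^[k] (tauIt tau i (n + k) x) = tauIt tau i n x + K := by
  induction k with
  | zero => exact ⟨0, fun x => by simp⟩
  | succ k ih =>
    obtain ⟨K, hK⟩ := ih
    refine ⟨K + d ^ k * i (n + k), fun x => ?_⟩
    rw [← add_assoc, tauIt, iterate_succ_apply, htau, iterate_add_natCast hdeg, hK]
    push_cast
    ring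

lemma minExpansion_mul_abs_tauIt_sub_le (hT : Differentiable ℝ T) (hT' : ∀ x, 1 ≤ deriv T x)
    (htau : ∀ x, T (tau x) = x) (hdeg : ∀ x, T (x + 1) = T x + d) (i : ℕ → ℕ) (x y : ℝ)
    (n k : ℕ) :
    minExpansion T k * |tauIt tau i (n + k) x - tauIt tau i (n + k) y| ≤
      |tauIt tau i n x - tauIt tau i n y| := by
  obtain ⟨K, hK⟩ := exists_iterate_tauIt_eq_add htau hdeg i n k
  simpa [hK] using minExpansion_mul_abs_sub_le hT hT' k (tauIt tau i (n + k) x)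
    (tauIt tau i (n + k) y)

lemma antitone_abs_tauIt_sub (hT : Differentiable ℝ T) (hT' : ∀ x, 1 ≤ deriv T x)
    (htau : ∀ x, T (tau x) = x) (hdeg : ∀ x, T (x + 1) = T x + d) (i : ℕ → ℕ) (x y : ℝ) :
    Antitone fun n => |tauIt tau i n x - tauIt tau i n y| :=
  antitone_nat_of_succ_le fun n =>
    (le_mul_of_one_le_left (abs_nonneg _) (one_le_minExpansion hT hT' 1)).trans
      (minExpansion_mul_abs_tauIt_sub_le hT hT' htau hdeg i x y n 1)

end Orbits

lemma pow_mul_le_of_pow_mul_add_le {c : ℝ} (hc : 1 ≤ c) {e : ℕ → ℝ} (he0 : ∀ n, 0 ≤ e n)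
    (he : Antitone e) {m : ℕ} (hm : 0 < m) (hstep : ∀ n, c ^ m * e (n + m) ≤ e n) (n : ℕ) :
    c ^ n * e n ≤ c ^ m * e 0 := by
  induction n using Nat.strong_induction_on with
  | _ n ih =>
    rcases lt_or_ge n m with hnm | hnm
    · exact mul_le_mul (pow_le_pow_right₀ hc hnm.le) (he (Nat.zero_le n)) (he0 n)
        (pow_nonneg (zero_le_one.trans hc) _)
    · obtain ⟨k, rfl⟩ := Nat.exists_eq_add_of_le' hnm
      calc c ^ (k + m) * e (k + m) = c ^ k * (c ^ m * e (k + m)) := by ring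
        _ ≤ c ^ k * e k :=
          mul_le_mul_of_nonneg_left (hstep k) (pow_nonneg (zero_le_one.trans hc) _)
        _ ≤ c ^ m * e 0 := ih k (by omega)

lemma exists_lt_rpow_of_lt_iSup_rpow {ι : Type*} [Nonempty ι] {c : ι → ℝ} (hc : ∀ i, 0 ≤ c i)
    {a α : ℝ} (ha : 0 ≤ a) (hα : 0 ≤ α) (h : a < (⨆ i, c i) ^ α) : ∃ i, a < c i ^ α := by
  rcases hα.eq_or_lt with rfl | hα
  · simp only [Real.rpow_zero] at h ⊢
    exact ⟨Classical.arbitrary ι, h⟩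
  by_contra! hle
  have hsup : ⨆ i, c i ≤ a ^ α⁻¹ :=
    ciSup_le fun i => (Real.le_rpow_inv_iff_of_pos (hc i) ha hα).2 (hle i)
  exact h.not_ge <| (Real.rpow_le_rpow (Real.iSup_nonneg hc) hsup hα.le).trans_eq
    (Real.rpow_inv_rpow ha hα.ne')

lemma summable_pow_mul_sub_of_holderWith {φ : ℝ → ℂ} {C α : NNReal} (hφ : HolderWith C α φ)
    {u v : ℕ → ℝ} {c B : ℝ} (hc : 0 < c) (hB : ∀ n, c ^ n * |u n - v n| ≤ B) {lam : ℂ}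
    (hlam : ‖lam‖ < c ^ (α : ℝ)) : Summable fun n => lam ^ n * (φ (u n) - φ (v n)) := by
  have hcα : 0 < c ^ (α : ℝ) := Real.rpow_pos_of_pos hc _
  have hB0 : 0 ≤ B := (abs_nonneg _).trans (by simpa using hB 0)
  have hq : ‖lam‖ / c ^ (α : ℝ) < 1 := (div_lt_one hcα).2 hlam
  refine Summable.of_norm_bounded ((summable_geometric_of_lt_one (by positivity) hq).mul_left
    (C * B ^ (α : ℝ))) fun n => ?_
  have hdist : |u n - v n| ≤ B / c ^ n := (le_div_iff₀' (by positivity)).2 (hB n)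
  have hholder : ‖φ (u n) - φ (v n)‖ ≤ C * |u n - v n| ^ (α : ℝ) := by
    simpa [Complex.dist_eq, Real.dist_eq] using hφ.dist_le (u n) (v n)
  calc ‖lam ^ n * (φ (u n) - φ (v n))‖ = ‖lam‖ ^ n * ‖φ (u n) - φ (v n)‖ := by
        rw [norm_mul, norm_pow]
    _ ≤ ‖lam‖ ^ n * (C * (B / c ^ n) ^ (α : ℝ)) := by gcongr; exact hholder.trans (by gcongr)
    _ = C * B ^ (α : ℝ) * (‖lam‖ / c ^ (α : ℝ)) ^ n := by
        rw [Real.div_rpow hB0 (by positivity), ← Real.rpow_pow_comm hc.le, div_pow]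
        field_simp

lemma tsum_sub_succ {G : Type*} [AddCommGroup G] [TopologicalSpace G] [IsTopologicalAddGroup G]
    [T2Space G] {g : ℕ → G} (hg : Summable g) : ∑' n, (g n - g (n + 1)) = g 0 := by
  rw [hg.tsum_sub ((summable_nat_add_iff 1).2 hg), hg.tsum_eq_zero_add, add_sub_cancel_right]

lemma pow_succ_mul_sub_eq_of_coboundary {T : ℝ → ℝ} {f φ : ℝ → ℂ} {lam c : ℂ} (hlam : lam ≠ 0)
    (hφ : Periodic φ 1) (hcoh : ∀ x, f x = lam⁻¹ * φ (T x) - φ x + c) {a b a' b' : ℝ} {K : ℕ}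
    (ha : T a' = a + K) (hb : T b' = b + K) (n : ℕ) :
    lam ^ (n + 1) * (f a' - f b') = lam ^ n * (φ a - φ b) - lam ^ (n + 1) * (φ a' - φ b') := by
  have hK : ∀ x, φ (x + K) = φ x := by simpa using hφ.nat_mul K
  rw [hcoh, hcoh, ha, hb, hK, hK]
  field_simp
  ring

theorem stmt_8_general (d : ℕ)
    (That : ℝ → ℝ) (hTC1 : ContDiff ℝ 1 That)
    (hTdeg : ∀ x, That (x + 1) = That x + d)
    (hTexp : ∀ x, 1 < deriv That x)
    (tau : ℝ → ℝ) (htau1 : ∀ x, That (tau x) = x)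
    (α : NNReal)
    (fhat : ℝ → ℂ)
    (lam : ℂ) (hlam0 : 0 < ‖lam‖)
    (hlam : ‖lam‖ <
      (⨆ n : ℕ, sInf (Set.range fun x => |deriv (That^[n + 1]) x|) ^ (((n : ℝ) + 1)⁻¹))
        ^ (α : ℝ))
    (phihat : ℝ → ℂ) (hphiper : Function.Periodic phihat 1)
    (Cphi : NNReal) (hphiH : HolderWith Cphi α phihat)
    (c : ℂ) (hcoh : ∀ x, fhat x = lam⁻¹ * phihat (That x) - phihat x + c) :
    ∀ i : ℕ → Fin d,
      hFun tau fhat lam (fun m => (i m : ℕ)) = fun x => phihat x - phihat 0 := by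
  intro i
  funext x
  set j : ℕ → ℕ := fun m => (i m : ℕ)
  have hT : Differentiable ℝ That := hTC1.differentiable one_ne_zero
  have hT' : ∀ y, 1 ≤ deriv That y := fun y => (hTexp y).le
  have hθ : ∀ k, 1 ≤ minExpansion That k := one_le_minExpansion hT hT'
  obtain ⟨m, hm⟩ := exists_lt_rpow_of_lt_iSup_rpow
    (c := fun n => minExpansion That (n + 1) ^ ((n : ℝ) + 1)⁻¹)
    (fun n => Real.rpow_nonneg (zero_le_one.trans (hθ _)) _) (norm_nonneg lam) α.2 hlam
  set ρ := minExpansion That (m + 1) ^ ((m : ℝ) + 1)⁻¹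
  have hρm : ρ ^ (m + 1) = minExpansion That (m + 1) := by
    simpa using Real.rpow_inv_natCast_pow (zero_le_one.trans (hθ (m + 1))) m.succ_ne_zero
  have hρ : 1 ≤ ρ := Real.one_le_rpow (hθ (m + 1)) (by positivity)
  have hdecay := pow_mul_le_of_pow_mul_add_le hρ (fun n => abs_nonneg _)
    (antitone_abs_tauIt_sub hT hT' htau1 hTdeg j x 0) m.succ_pos
    (fun n => hρm ▸ minExpansion_mul_abs_tauIt_sub_le hT hT' htau1 hTdeg j x 0 n (m + 1))
  set g : ℕ → ℂ := fun n => lam ^ n * (phihat (tauIt tau j n x) - phihat (tauIt tau j n 0))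
  have hsum : Summable g :=
    summable_pow_mul_sub_of_holderWith hphiH (zero_lt_one.trans_le hρ) hdecay hm
  calc hFun tau fhat lam j x = ∑' n, (g n - g (n + 1)) :=
        tsum_congr fun n => pow_succ_mul_sub_eq_of_coboundary (norm_pos_iff.1 hlam0) hphiper
          hcoh (htau1 _) (htau1 _) n
    _ = phihat x - phihat 0 := by rw [tsum_sub_succ hsum]; simp [g, tauIt]

/-- In the transversality setup: if there is a `C^α` function
`φ` on the circle (with 1-periodic `α`-Hölder lift `φ̂`) and a constant `c` such that
`f = λ⁻¹ φ∘T − φ + c`, then `h_i = φ̂ − φ̂(0)` for every `i ∈ Σ_d`; in particular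
`h_i` does not depend on `i`. -/
theorem stmt_8 (d : ℕ) (hd : 2 ≤ d)
    (That : ℝ → ℝ) (hTC1 : ContDiff ℝ 1 That) (hT0 : That 0 = 0)
    (hTdeg : ∀ x, That (x + 1) = That x + d)
    (hTexp : ∀ x, 1 < deriv That x)
    (tau : ℝ → ℝ) (htau1 : ∀ x, That (tau x) = x) (htau2 : ∀ x, tau (That x) = x)
    (α : NNReal) (hα : 0 < α) (hα1 : α ≤ 1)
    (fhat : ℝ → ℂ) (hfper : Function.Periodic fhat 1)
    (C : NNReal) (hfH : HolderWith C α fhat)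
    (lam : ℂ) (hlam0 : 0 < ‖lam‖)
    (hlam : ‖lam‖ <
      (⨆ n : ℕ, sInf (Set.range fun x => |deriv (That^[n + 1]) x|) ^ (((n : ℝ) + 1)⁻¹))
        ^ (α : ℝ))
    (phihat : ℝ → ℂ) (hphiper : Function.Periodic phihat 1)
    (Cphi : NNReal) (hphiH : HolderWith Cphi α phihat)
    (c : ℂ) (hcoh : ∀ x, fhat x = lam⁻¹ * phihat (That x) - phihat x + c) :
    ∀ i : ℕ → Fin d,
      hFun tau fhat lam (fun m => (i m : ℕ)) = fun x => phihat x - phihat 0 :=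
  stmt_8_general d That hTC1 hTdeg hTexp tau htau1 α fhat lam hlam0 hlam phihat hphiper Cphi hphiH c
    hcoh
end

section
/- (Sub-action telescoping/holonomy inequality) Let T be a C¹ expanding circle map with T(0)=0, not orientation-reversing, f : ℝ/ℤ → ℝ continuous, and g a sub-action: f ≤ g∘T − g + β(f) pointwise, where β(f) = sup over T-invariant measures of ∫f dμ. Let S be a compact T-invariant subset of (0,1) on which equality f = g∘T − g + β(f) holds along all backward orbits considered. Suppose the digit sequence i ∈ Σ_d and x ∈ S satisfy τ_{i,n}(x) ∈ S for all n ≥ 1 (so (i,x) ∈ 𝒮), and h_i(x) = Σ_{n≥1}(f̂∘τ_{i,n}(x) − f̂∘τ_{i,n}(0)) converges. Then for any y ∈ S: g(y) − g(x) ≥ h_i(y) − h_i(x), with equality if also τ_{i,n}(y) ∈ S for all n ≥ 1. -/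
open MeasureTheory

/-- `β(T,f) = sup { ∫ f dμ : μ a T-invariant Borel probability measure }`. -/
noncomputable def betaMax (T : AddCircle (1 : ℝ) → AddCircle (1 : ℝ))
    (f : AddCircle (1 : ℝ) → ℝ) : ℝ :=
  sSup {r : ℝ | ∃ μ : Measure (AddCircle (1 : ℝ)), IsProbabilityMeasure μ ∧
    Measure.map T μ = μ ∧ r = ∫ y, f y ∂μ}

/-!
Along a backward orbit `p` of `T` (`T (p (n+1)) = p n`) the sub-action inequality reads
`f (p (n+1)) ≤ g (p n) - g (p (n+1)) + β`, with equality while the orbit stays in `S`.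
Comparing the orbits of `y` and `x` under the same inverse branches `τ_{i,n}`, the `β`'s cancel
and the partial sums of `h_i(y) - h_i(x)` telescope to at most
`g(y) - g(x) - (g(τ_{i,N} y) - g(τ_{i,N} x))`. The derivative of `T̂` is continuous and
`1`-periodic, hence bounded below by some `λ > 1`, so `τ` contracts by `λ⁻¹` and the correction
term tends to `0` by uniform continuity of `g`. Exchanging `x` and `y` gives the equality case.
-/

open Filter Topology Finset

theorem AddCircle.coe_add_natCast_one (a : ℝ) (k : ℕ) :
    ((a + k : ℝ) : AddCircle (1 : ℝ)) = a := by
  simpa using ⟨(k : ℤ), by simp⟩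

theorem apply_coe_tauIt_succ {T : AddCircle (1 : ℝ) → AddCircle (1 : ℝ)} {That tau : ℝ → ℝ}
    (hlift : ∀ x : ℝ, ((That x : ℝ) : AddCircle (1 : ℝ)) = T (x : ℝ))
    (htau : ∀ x, That (tau x) = x) (i : ℕ → ℕ) (z : ℝ) (n : ℕ) :
    T (tauIt tau i (n + 1) z) = tauIt tau i n z := by
  rw [← hlift, tauIt, htau, AddCircle.coe_add_natCast_one]

section Telescoping

variable {X : Type*} {T : X → X} {f g : X → ℝ} {β : ℝ} {p q r : ℕ → X}

theorem sum_range_sub_le_of_subaction (hsub : ∀ y, f y ≤ g (T y) - g y + β)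
    (hp : ∀ n, T (p (n + 1)) = p n) (hq : ∀ n, T (q (n + 1)) = q n)
    (hq_eq : ∀ n, f (q (n + 1)) = g (T (q (n + 1))) - g (q (n + 1)) + β) (N : ℕ) :
    ∑ n ∈ range N, (f (p (n + 1)) - f (q (n + 1))) ≤
      g (p 0) - g (q 0) - (g (p N) - g (q N)) := by
  rw [← Finset.sum_range_sub' (fun n => g (p n) - g (q n))]
  refine Finset.sum_le_sum fun n _ => ?_
  have := hsub (p (n + 1))
  rw [hp] at this
  rw [hq_eq, hq]
  linarith

theorem tsum_sub_tsum_le_of_subaction (hsub : ∀ y, f y ≤ g (T y) - g y + β)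
    (hp : ∀ n, T (p (n + 1)) = p n) (hq : ∀ n, T (q (n + 1)) = q n)
    (hq_eq : ∀ n, f (q (n + 1)) = g (T (q (n + 1))) - g (q (n + 1)) + β)
    (hps : Summable fun n => f (p (n + 1)) - f (r (n + 1)))
    (hqs : Summable fun n => f (q (n + 1)) - f (r (n + 1)))
    (hlim : Tendsto (fun N => g (p N) - g (q N)) atTop (𝓝 0)) :
    ∑' n, (f (p (n + 1)) - f (r (n + 1))) - ∑' n, (f (q (n + 1)) - f (r (n + 1))) ≤
      g (p 0) - g (q 0) := by
  have hpartial := ((hps.hasSum.sub hqs.hasSum).tendsto_sum_nat).add hlim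
  rw [add_zero] at hpartial
  refine le_of_tendsto' hpartial fun N => ?_
  have := sum_range_sub_le_of_subaction hsub hp hq hq_eq N
  simp only [sub_sub_sub_cancel_right]
  linarith

end Telescoping

theorem UniformContinuous.tendsto_sub_nhds_zero {α β ι : Type*} [UniformSpace α] [AddGroup α]
    [IsUniformAddGroup α] [UniformSpace β] [AddGroup β] [IsUniformAddGroup β] {G : α → β}
    (hG : UniformContinuous G) {a b : ι → α} {l : Filter ι}
    (h : Tendsto (fun n => a n - b n) l (𝓝 0)) :
    Tendsto (fun n => G (a n) - G (b n)) l (𝓝 0) := by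
  have hpair : Tendsto (fun n => (b n, a n)) l (uniformity α) := by
    rwa [uniformity_eq_comap_nhds_zero α, tendsto_comap_iff]
  have := Filter.Tendsto.comp hG hpair
  rwa [uniformity_eq_comap_nhds_zero β, tendsto_comap_iff] at this

theorem Function.Periodic.deriv_of_add_const {F : ℝ → ℝ} {c d : ℝ}
    (h : ∀ x, F (x + c) = F x + d) : Function.Periodic (deriv F) c := fun x => by
  simpa only [deriv_comp_add_const, deriv_add_const] using
    congrArg (fun G => deriv G x) (funext h)

theorem Function.Periodic.exists_lt_forall_le_of_continuous {φ : ℝ → ℝ} {c a : ℝ}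
    (hper : Function.Periodic φ c) (hc : c ≠ 0) (hφ : Continuous φ) (ha : ∀ x, a < φ x) :
    ∃ m, a < m ∧ ∀ x, m ≤ φ x := by
  obtain ⟨_, ⟨x₀, rfl⟩, hmin⟩ :=
    (hper.compact_of_continuous hc hφ).exists_isLeast (Set.range_nonempty _)
  exact ⟨φ x₀, ha x₀, fun x => hmin ⟨x, rfl⟩⟩

theorem mul_abs_sub_le_abs_sub_of_le_deriv_s14 {F : ℝ → ℝ} (hF : Differentiable ℝ F) {C : ℝ}
    (hderiv : ∀ x, C ≤ deriv F x) (x y : ℝ) :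
    C * |y - x| ≤ |F y - F x| := by
  wlog hxy : x ≤ y generalizing x y
  · rw [abs_sub_comm y, abs_sub_comm (F y)]
    exact this y x (le_of_not_ge hxy)
  have h := mul_sub_le_image_sub_of_le_deriv hF hderiv hxy
  rw [abs_of_nonneg (sub_nonneg.2 hxy)]
  exact h.trans (le_abs_self _)

theorem abs_sub_le_inv_mul_of_rightInverse {F tau : ℝ → ℝ} (hF : Differentiable ℝ F) {C : ℝ}
    (hC : 0 < C) (hderiv : ∀ x, C ≤ deriv F x) (htau : Function.RightInverse tau F) (a b : ℝ) :
    |tau a - tau b| ≤ C⁻¹ * |a - b| := by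
  rw [le_inv_mul_iff₀ hC]
  simpa only [htau a, htau b] using mul_abs_sub_le_abs_sub_of_le_deriv_s14 hF hderiv (tau b) (tau a)

theorem abs_tauIt_sub_le {tau : ℝ → ℝ} {K : ℝ} (hK : 0 ≤ K)
    (htau : ∀ a b, |tau a - tau b| ≤ K * |a - b|) (i : ℕ → ℕ) (y x : ℝ) (n : ℕ) :
    |tauIt tau i n y - tauIt tau i n x| ≤ K ^ n * |y - x| := by
  induction n with
  | zero => simp [tauIt]
  | succ n ih =>
    calc |tauIt tau i (n + 1) y - tauIt tau i (n + 1) x|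
        ≤ K * |tauIt tau i n y - tauIt tau i n x| := by
          have := htau (tauIt tau i n y + i n) (tauIt tau i n x + i n)
          rwa [add_sub_add_right_eq_sub] at this
      _ ≤ K ^ (n + 1) * |y - x| := by
          rw [pow_succ', mul_assoc]; exact mul_le_mul_of_nonneg_left ih hK

theorem tendsto_tauIt_sub_nhds_zero {tau : ℝ → ℝ} {K : ℝ} (hK₀ : 0 ≤ K) (hK₁ : K < 1)
    (htau : ∀ a b, |tau a - tau b| ≤ K * |a - b|) (i : ℕ → ℕ) (y x : ℝ) :
    Tendsto (fun n => tauIt tau i n y - tauIt tau i n x) atTop (𝓝 0) := by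
  refine squeeze_zero_norm (abs_tauIt_sub_le hK₀ htau i y x) ?_
  simpa using (tendsto_pow_atTop_nhds_zero_of_lt_one hK₀ hK₁).mul_const |y - x|

theorem stmt_14_general (d : ℕ)
    (T : AddCircle (1 : ℝ) → AddCircle (1 : ℝ))
    (That : ℝ → ℝ) (hlift : ∀ x : ℝ, ((That x : ℝ) : AddCircle (1 : ℝ)) = T (x : ℝ))
    (hTC1 : ContDiff ℝ 1 That)
    (hTdeg : ∀ x, That (x + 1) = That x + d)
    (hTexp : ∀ x, 1 < deriv That x)
    (tau : ℝ → ℝ) (htau1 : ∀ x, That (tau x) = x)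
    (f : AddCircle (1 : ℝ) → ℝ)
    (g : AddCircle (1 : ℝ) → ℝ) (hg : Continuous g)
    (hsub : ∀ y, f y ≤ g (T y) - g y + betaMax T f)
    (S : Set ℝ)
    (heq : ∀ x ∈ S, f (x : ℝ) = g (T (x : ℝ)) - g (x : ℝ) + betaMax T f)
    (i : ℕ → Fin d) (x : ℝ)
    (hback : ∀ n : ℕ, 1 ≤ n → tauIt tau (fun m => (i m : ℕ)) n x ∈ S)
    (hsum : ∀ z : ℝ, Summable (fun n : ℕ =>
      f ((tauIt tau (fun m => (i m : ℕ)) (n + 1) z : ℝ) : AddCircle (1 : ℝ))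
        - f ((tauIt tau (fun m => (i m : ℕ)) (n + 1) 0 : ℝ) : AddCircle (1 : ℝ)))) :
    ∀ y ∈ S,
      (g ((y : ℝ) : AddCircle (1 : ℝ)) - g ((x : ℝ) : AddCircle (1 : ℝ)) ≥
        (∑' n : ℕ, (f ((tauIt tau (fun m => (i m : ℕ)) (n + 1) y : ℝ) : AddCircle (1 : ℝ))
            - f ((tauIt tau (fun m => (i m : ℕ)) (n + 1) 0 : ℝ) : AddCircle (1 : ℝ))))
        - (∑' n : ℕ, (f ((tauIt tau (fun m => (i m : ℕ)) (n + 1) x : ℝ) : AddCircle (1 : ℝ))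
            - f ((tauIt tau (fun m => (i m : ℕ)) (n + 1) 0 : ℝ) : AddCircle (1 : ℝ))))) ∧
      ((∀ n : ℕ, 1 ≤ n → tauIt tau (fun m => (i m : ℕ)) n y ∈ S) →
        g ((y : ℝ) : AddCircle (1 : ℝ)) - g ((x : ℝ) : AddCircle (1 : ℝ)) =
        (∑' n : ℕ, (f ((tauIt tau (fun m => (i m : ℕ)) (n + 1) y : ℝ) : AddCircle (1 : ℝ))
            - f ((tauIt tau (fun m => (i m : ℕ)) (n + 1) 0 : ℝ) : AddCircle (1 : ℝ))))
        - (∑' n : ℕ, (f ((tauIt tau (fun m => (i m : ℕ)) (n + 1) x : ℝ) : AddCircle (1 : ℝ))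
            - f ((tauIt tau (fun m => (i m : ℕ)) (n + 1) 0 : ℝ) : AddCircle (1 : ℝ))))) := by
  intro y _
  set p : ℝ → ℕ → AddCircle (1 : ℝ) := fun z n => tauIt tau (fun m => (i m : ℕ)) n z
  have horbit (z : ℝ) (n : ℕ) : T (p z (n + 1)) = p z n :=
    apply_coe_tauIt_succ hlift htau1 _ z n
  obtain ⟨lam, hlam, hderiv⟩ :=
    (Function.Periodic.deriv_of_add_const hTdeg).exists_lt_forall_le_of_continuous one_ne_zero
      (hTC1.continuous_deriv le_rfl) hTexp
  have hcontr := abs_sub_le_inv_mul_of_rightInverse (hTC1.differentiable one_ne_zero)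
    (zero_lt_one.trans hlam) hderiv htau1
  have hg_coe : UniformContinuous fun r : ℝ => g r :=
    (CompactSpace.uniformContinuous_of_continuous hg).comp
      (uniformContinuous_addMonoidHom_of_continuous (f := QuotientAddGroup.mk' _)
        continuous_quotient_mk')
  have hholonomy (z z' : ℝ) (hz' : ∀ n : ℕ, 1 ≤ n → tauIt tau (fun m => (i m : ℕ)) n z' ∈ S) :
      ∑' n, (f (p z (n + 1)) - f (p 0 (n + 1))) - ∑' n, (f (p z' (n + 1)) - f (p 0 (n + 1)))
        ≤ g z - g z' :=
    tsum_sub_tsum_le_of_subaction hsub (horbit z) (horbit z')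
      (fun n => heq _ (hz' (n + 1) n.succ_pos)) (hsum z) (hsum z')
      (hg_coe.tendsto_sub_nhds_zero (tendsto_tauIt_sub_nhds_zero (by positivity)
        (inv_lt_one_of_one_lt₀ hlam) hcontr _ z z'))
  refine ⟨hholonomy y x hback, fun hy => le_antisymm ?_ (hholonomy y x hback)⟩
  linarith [hholonomy x y hy]

/-- **Sub-action telescoping / holonomy inequality.**
`T` is a `C¹` expanding, not orientation-reversing, circle map of degree `d` fixing `0`
(lift `T̂`, `τ = T̂⁻¹`), `f` continuous, `g` a sub-action (`f ≤ g∘T − g + β(f)`), `S` a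
compact `T`-invariant subset of `(0,1)` on which equality holds. If `(i,x) ∈ 𝒮`
(i.e. `x ∈ S` and `τ_{i,n}(x) ∈ S` for all `n ≥ 1`) and the series defining `h_i`
converges, then for every `y ∈ S`: `g(y) − g(x) ≥ h_i(y) − h_i(x)`, with equality if
moreover `τ_{i,n}(y) ∈ S` for all `n ≥ 1`. -/
theorem stmt_14 (d : ℕ) (hd : 2 ≤ d)
    (T : AddCircle (1 : ℝ) → AddCircle (1 : ℝ)) (hTcont : Continuous T)
    (That : ℝ → ℝ) (hlift : ∀ x : ℝ, ((That x : ℝ) : AddCircle (1 : ℝ)) = T (x : ℝ))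
    (hTC1 : ContDiff ℝ 1 That) (hT0 : That 0 = 0)
    (hTdeg : ∀ x, That (x + 1) = That x + d)
    (hTexp : ∀ x, 1 < deriv That x)
    (tau : ℝ → ℝ) (htau1 : ∀ x, That (tau x) = x) (htau2 : ∀ x, tau (That x) = x)
    (f : AddCircle (1 : ℝ) → ℝ) (hf : Continuous f)
    (g : AddCircle (1 : ℝ) → ℝ) (hg : Continuous g)
    (hsub : ∀ y, f y ≤ g (T y) - g y + betaMax T f)
    (S : Set ℝ) (hScomp : IsCompact S) (hS01 : S ⊆ Set.Ioo 0 1)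
    (hSinv : T '' ((fun x : ℝ => (x : AddCircle (1 : ℝ))) '' S)
      = (fun x : ℝ => (x : AddCircle (1 : ℝ))) '' S)
    (heq : ∀ x ∈ S, f (x : ℝ) = g (T (x : ℝ)) - g (x : ℝ) + betaMax T f)
    (i : ℕ → Fin d) (x : ℝ) (hxS : x ∈ S)
    (hback : ∀ n : ℕ, 1 ≤ n → tauIt tau (fun m => (i m : ℕ)) n x ∈ S)
    (hsum : ∀ z : ℝ, Summable (fun n : ℕ =>
      f ((tauIt tau (fun m => (i m : ℕ)) (n + 1) z : ℝ) : AddCircle (1 : ℝ))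
        - f ((tauIt tau (fun m => (i m : ℕ)) (n + 1) 0 : ℝ) : AddCircle (1 : ℝ)))) :
    ∀ y ∈ S,
      (g ((y : ℝ) : AddCircle (1 : ℝ)) - g ((x : ℝ) : AddCircle (1 : ℝ)) ≥
        (∑' n : ℕ, (f ((tauIt tau (fun m => (i m : ℕ)) (n + 1) y : ℝ) : AddCircle (1 : ℝ))
            - f ((tauIt tau (fun m => (i m : ℕ)) (n + 1) 0 : ℝ) : AddCircle (1 : ℝ))))
        - (∑' n : ℕ, (f ((tauIt tau (fun m => (i m : ℕ)) (n + 1) x : ℝ) : AddCircle (1 : ℝ))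
            - f ((tauIt tau (fun m => (i m : ℕ)) (n + 1) 0 : ℝ) : AddCircle (1 : ℝ))))) ∧
      ((∀ n : ℕ, 1 ≤ n → tauIt tau (fun m => (i m : ℕ)) n y ∈ S) →
        g ((y : ℝ) : AddCircle (1 : ℝ)) - g ((x : ℝ) : AddCircle (1 : ℝ)) =
        (∑' n : ℕ, (f ((tauIt tau (fun m => (i m : ℕ)) (n + 1) y : ℝ) : AddCircle (1 : ℝ))
            - f ((tauIt tau (fun m => (i m : ℕ)) (n + 1) 0 : ℝ) : AddCircle (1 : ℝ))))
        - (∑' n : ℕ, (f ((tauIt tau (fun m => (i m : ℕ)) (n + 1) x : ℝ) : AddCircle (1 : ℝ))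
            - f ((tauIt tau (fun m => (i m : ℕ)) (n + 1) 0 : ℝ) : AddCircle (1 : ℝ))))) :=
  stmt_14_general d T That hlift hTC1 hTdeg hTexp tau htau1 f g hg hsub S heq i x hback hsum
end
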